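/- arXiv:1612.07946 — 3 statements merged into one kernel-verified Lean document; each statement's English description precedes it below -/
import Mathlib

section
/- Let μ be a probability measure on the K-simplex, M the matrix with M_{ij} = E_μ[√(p_i p_j)], and a a unit eigenvector of M for its largest eigenvalue. Then q with q_k = a_k² lies in the K-simplex and maximizes E_μ[B(p,q)²] over all q in the K-simplex, with maximum value λ_max(M). -/
open MeasureTheory Matrix

lemma integral_B_sq {K : ℕ} (μ : Measure (Fin K → ℝ)) [IsProbabilityMeasure μ]
    (hsupp : ∀ᵐ p ∂μ, (∀ k, 0 ≤ p k) ∧ ∑ k, p k = 1)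
    (M : Matrix (Fin K) (Fin K) ℝ)
    (hM : M = Matrix.of fun i j => ∫ p, Real.sqrt (p i * p j) ∂μ)
    (q : Fin K → ℝ) :
    (∫ p, (∑ k, Real.sqrt (p k * q k)) ^ 2 ∂μ)
      = ∑ i, ∑ j, Real.sqrt (q i) * Real.sqrt (q j) * M i j := by
  classical
  have hmeas : ∀ i j : Fin K, AEStronglyMeasurable (fun p : Fin K → ℝ => Real.sqrt (p i * p j)) μ := by
    intro i j
    exact (((measurable_pi_apply i).mul (measurable_pi_apply j)).sqrt).aestronglyMeasurable
  have hint : ∀ i j : Fin K, Integrable (fun p : Fin K → ℝ => Real.sqrt (p i * p j)) μ := by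
    intro i j
    refine Integrable.mono' (integrable_const 1) (hmeas i j) ?_
    filter_upwards [hsupp] with p hp
    have h1 : ∀ k, p k ≤ 1 := by
      intro k
      calc p k ≤ ∑ m, p m := Finset.single_le_sum (fun m _ => hp.1 m) (Finset.mem_univ k)
        _ = 1 := hp.2
    rw [Real.norm_eq_abs, abs_of_nonneg (Real.sqrt_nonneg _)]
    calc Real.sqrt (p i * p j) ≤ Real.sqrt 1 :=
          Real.sqrt_le_sqrt (by nlinarith [hp.1 i, hp.1 j, h1 i, h1 j])
      _ = 1 := Real.sqrt_one
  have hcongr : (∫ p, (∑ k, Real.sqrt (p k * q k)) ^ 2 ∂μ)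
      = ∫ p, ∑ i, ∑ j, Real.sqrt (q i) * Real.sqrt (q j) * Real.sqrt (p i * p j) ∂μ := by
    refine integral_congr_ae ?_
    filter_upwards [hsupp] with p hp
    have hs : ∀ k, Real.sqrt (p k * q k) = Real.sqrt (p k) * Real.sqrt (q k) := fun k =>
      Real.sqrt_mul (hp.1 k) _
    have hs2 : ∀ i j : Fin K, Real.sqrt (p i * p j) = Real.sqrt (p i) * Real.sqrt (p j) :=
      fun i j => Real.sqrt_mul (hp.1 i) _
    rw [sq, Finset.sum_mul_sum]
    refine Finset.sum_congr rfl fun i _ => Finset.sum_congr rfl fun j _ => ?_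
    rw [hs, hs, hs2]; ring
  rw [hcongr, integral_finset_sum]
  · refine Finset.sum_congr rfl fun i _ => ?_
    rw [integral_finset_sum]
    · refine Finset.sum_congr rfl fun j _ => ?_
      rw [MeasureTheory.integral_const_mul, hM]
      rfl
    · intro j _
      exact (hint i j).const_mul _
  · intro i _
    exact integrable_finset_sum _ fun j _ => (hint i j).const_mul _

lemma rayleigh_le {K : ℕ} (M : Matrix (Fin K) (Fin K) ℝ) (hH : M.IsHermitian)
    (lam : ℝ)
    (hlam : ∀ (c : ℝ) (x : Fin K → ℝ), x ≠ 0 → M.mulVec x = c • x → c ≤ lam)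
    (x : Fin K → ℝ) (hx : ∑ k, x k ^ 2 = 1) :
    ∑ i, ∑ j, x i * x j * M i j ≤ lam := by
  classical
  set B := hH.eigenvectorBasis with hB
  have hsymm : Mᵀ = M := by
    have := hH.eq
    rwa [Matrix.conjTranspose_eq_transpose_of_trivial] at this
  set y : EuclideanSpace ℝ (Fin K) := WithLp.toLp 2 x with hy
  have hrepr : ∀ i, B.repr (WithLp.toLp 2 (M.mulVec ⇑y)) i
      = hH.eigenvalues i * B.repr y i := by
    intro i
    rw [B.repr_apply_apply, B.repr_apply_apply]
    have h1 : (inner ℝ (B i) (WithLp.toLp 2 (M.mulVec ⇑y)) : ℝ)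
        = dotProduct (⇑(B i)) (M.mulVec ⇑y) := by
      simp [PiLp.inner_apply, RCLike.inner_apply, dotProduct, mul_comm]
    have h2 : dotProduct (⇑(B i)) (M.mulVec ⇑y)
        = dotProduct (M.mulVec (⇑(B i))) ⇑y := by
      rw [dotProduct_mulVec, ← Matrix.mulVec_transpose, hsymm]
    rw [h1, h2, hH.mulVec_eigenvectorBasis]
    simp [PiLp.inner_apply, RCLike.inner_apply, dotProduct, Finset.mul_sum, mul_assoc]
    exact Finset.sum_congr rfl fun _ _ => by rw [hB]; ring
  have hParseval : ∀ z w : EuclideanSpace ℝ (Fin K),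
      (inner ℝ z w : ℝ) = ∑ i, B.repr z i * B.repr w i := by
    intro z w
    have h := B.repr.inner_map_map z w
    simp only [PiLp.inner_apply, RCLike.inner_apply, conj_trivial] at h ⊢
    exact h.symm.trans (Finset.sum_congr rfl fun _ _ => mul_comm _ _)
  have hnorm : ∑ i, (B.repr y i) ^ 2 = 1 := by
    have := hParseval y y
    simp only [PiLp.inner_apply, RCLike.inner_apply, conj_trivial] at this
    calc ∑ i, (B.repr y i) ^ 2 = ∑ i, B.repr y i * B.repr y i := by
          simp [sq]
      _ = ∑ i, y i * y i := this.symm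
      _ = ∑ k, x k ^ 2 := by simp [hy, sq]
      _ = 1 := hx
  have hinner : (inner ℝ y (WithLp.toLp 2 (M.mulVec ⇑y)) : ℝ)
      = ∑ i, ∑ j, x i * x j * M i j := by
    simp only [PiLp.inner_apply, RCLike.inner_apply, conj_trivial]
    refine Finset.sum_congr rfl fun i _ => ?_
    simp [Matrix.mulVec, dotProduct, Finset.mul_sum, hy]
    ring_nf
    rw [Finset.sum_mul]; exact Finset.sum_congr rfl fun j _ => by ring
  have heig : ∀ i, hH.eigenvalues i ≤ lam := by
    intro i
    exact hlam _ (⇑(B i)) (by simpa using B.orthonormal.ne_zero i) (hH.mulVec_eigenvectorBasis i)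
  calc ∑ i, ∑ j, x i * x j * M i j
      = ∑ i, hH.eigenvalues i * (B.repr y i) ^ 2 := by
        rw [← hinner, hParseval]
        refine Finset.sum_congr rfl fun i _ => ?_
        rw [hrepr]; ring
    _ ≤ ∑ i, lam * (B.repr y i) ^ 2 := by
        refine Finset.sum_le_sum fun i _ => ?_
        exact mul_le_mul_of_nonneg_right (heig i) (sq_nonneg _)
    _ = lam := by rw [← Finset.mul_sum, hnorm, mul_one]

theorem bayes_estimator_one_minus_B_sq {K : ℕ}
    (μ : Measure (Fin K → ℝ)) [IsProbabilityMeasure μ]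
    (hsupp : ∀ᵐ p ∂μ, (∀ k, 0 ≤ p k) ∧ ∑ k, p k = 1)
    (M : Matrix (Fin K) (Fin K) ℝ)
    (hM : M = Matrix.of fun i j => ∫ p, Real.sqrt (p i * p j) ∂μ)
    (lam : ℝ) (a : Fin K → ℝ)
    (ha_unit : ∑ k, (a k) ^ 2 = 1)
    (ha_eig : M.mulVec a = lam • a)
    (hlam_max : ∀ (c : ℝ) (x : Fin K → ℝ), x ≠ 0 → M.mulVec x = c • x → c ≤ lam) :
    let qstar : Fin K → ℝ := fun k => (a k) ^ 2
    (∀ k, 0 ≤ qstar k) ∧ (∑ k, qstar k = 1) ∧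
    (∫ p, (∑ k, Real.sqrt (p k * qstar k)) ^ 2 ∂μ) = lam ∧
    (∀ q : Fin K → ℝ, (∀ k, 0 ≤ q k) → (∑ k, q k = 1) →
      (∫ p, (∑ k, Real.sqrt (p k * q k)) ^ 2 ∂μ) ≤ lam) := by
  intro qstar
  have hH : M.IsHermitian := by
    rw [hM]
    ext i j
    simp only [Matrix.conjTranspose_apply, Matrix.of_apply, star_trivial]
    congr 1
    ext p
    rw [mul_comm]
  have hMnn : ∀ i j, 0 ≤ M i j := by
    intro i j
    rw [hM]
    exact integral_nonneg fun p => Real.sqrt_nonneg _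
  have hdot : ∀ i, (M.mulVec a) i = lam * a i := by
    intro i; rw [ha_eig]; simp
  have hlam_eq : ∑ i, ∑ j, a i * a j * M i j = lam := by
    have h1 : ∀ i, ∑ j, a i * a j * M i j = a i * (M.mulVec a) i := by
      intro i
      simp only [Matrix.mulVec, dotProduct, Finset.mul_sum]
      exact Finset.sum_congr rfl fun j _ => by ring
    calc ∑ i, ∑ j, a i * a j * M i j = ∑ i, a i * (M.mulVec a) i :=
          Finset.sum_congr rfl fun i _ => h1 i
      _ = ∑ i, lam * (a i) ^ 2 := by
          refine Finset.sum_congr rfl fun i _ => ?_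
          rw [hdot]; ring
      _ = lam := by rw [← Finset.mul_sum, ha_unit, mul_one]
  refine ⟨fun k => sq_nonneg _, ha_unit, ?_, ?_⟩
  · rw [integral_B_sq μ hsupp M hM qstar]
    have habs : ∀ k, Real.sqrt (qstar k) = |a k| := fun k => Real.sqrt_sq_eq_abs _
    have hupper : ∑ i, ∑ j, Real.sqrt (qstar i) * Real.sqrt (qstar j) * M i j ≤ lam := by
      refine rayleigh_le M hH lam hlam_max (fun k => Real.sqrt (qstar k)) ?_
      simp only [habs, sq_abs]
      exact ha_unit
    have hlower : lam ≤ ∑ i, ∑ j, Real.sqrt (qstar i) * Real.sqrt (qstar j) * M i j := by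
      rw [← hlam_eq]
      refine Finset.sum_le_sum fun i _ => Finset.sum_le_sum fun j _ => ?_
      rw [habs, habs]
      refine mul_le_mul_of_nonneg_right ?_ (hMnn i j)
      calc a i * a j ≤ |a i * a j| := le_abs_self _
        _ = |a i| * |a j| := abs_mul _ _
    linarith
  · intro q hq hq1
    rw [integral_B_sq μ hsupp M hM q]
    refine rayleigh_le M hH lam hlam_max (fun k => Real.sqrt (q k)) ?_
    calc ∑ k, Real.sqrt (q k) ^ 2 = ∑ k, q k :=
          Finset.sum_congr rfl fun k _ => Real.sq_sqrt (hq k)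
      _ = 1 := hq1
end

section
/- Let μ be a probability measure on the K-simplex with v = E_μ[√p] ≠ 0 (expectation of the elementwise square root). Then the maximum of E_μ[B(p,q)] over q in the K-simplex equals ‖v‖, attained at q_k = v_k²/‖v‖². -/
/-!
Since `√(p k * q k) = √(p k) * √(q k)`, linearity of the integral gives
`E_μ[B(p, q)] = ∑ k, √(q k) * v k`, the inner product of `√q` with `v`. As `√q` is a unit
vector, Cauchy–Schwarz bounds this by `‖v‖`, with equality when `√q` is parallel to `v`,
i.e. for `q = v² / ‖v‖²`.
-/

open MeasureTheory

section Simplex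

variable {ι : Type*} [Fintype ι]

theorem sum_sqrt_mul_le_sqrt_sum_sq {q : ι → ℝ} (hq : q ∈ stdSimplex ℝ ι) (v : ι → ℝ) :
    ∑ k, √(q k) * v k ≤ √(∑ k, v k ^ 2) := by
  have hunit : ∑ k, √(q k) ^ 2 = 1 := by
    rw [← hq.2]
    exact Finset.sum_congr rfl fun k _ => Real.sq_sqrt (hq.1 k)
  simpa [hunit] using Real.sum_mul_le_sqrt_mul_sqrt Finset.univ (fun k => √(q k)) v

theorem sq_div_sqrt_sum_sq_mem_stdSimplex {v : ι → ℝ} (hv : v ≠ 0) :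
    (fun k => v k ^ 2 / √(∑ j, v j ^ 2) ^ 2) ∈ stdSimplex ℝ ι := by
  have hpos : 0 < ∑ j, v j ^ 2 := by
    obtain ⟨k, hk⟩ := Function.ne_iff.mp hv
    exact Finset.sum_pos' (fun j _ => sq_nonneg (v j))
      ⟨k, Finset.mem_univ k, sq_pos_of_ne_zero hk⟩
  refine ⟨fun k => by positivity, ?_⟩
  rw [← Finset.sum_div, Real.sq_sqrt hpos.le, div_self hpos.ne']

theorem sum_sqrt_sq_div_mul_eq_sqrt_sum_sq {v : ι → ℝ} (hv : 0 ≤ v) :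
    ∑ k, √(v k ^ 2 / √(∑ j, v j ^ 2) ^ 2) * v k = √(∑ j, v j ^ 2) := by
  set s := √(∑ j, v j ^ 2)
  calc ∑ k, √(v k ^ 2 / s ^ 2) * v k = ∑ k, v k ^ 2 / s := by
        refine Finset.sum_congr rfl fun k _ => ?_
        rw [Real.sqrt_div' _ (sq_nonneg s), Real.sqrt_sq (hv k), Real.sqrt_sq (Real.sqrt_nonneg _)]
        ring
    _ = s ^ 2 / s := by
        rw [← Finset.sum_div, Real.sq_sqrt (Finset.sum_nonneg fun j _ => sq_nonneg (v j))]
    _ = s := by rw [sq, mul_self_div_self]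

end Simplex

section Integral

variable {ι : Type*} [Fintype ι] {μ : Measure (ι → ℝ)}

theorem integrable_sqrt_apply_of_ae_mem_stdSimplex [IsFiniteMeasure μ]
    (h : ∀ᵐ p ∂μ, p ∈ stdSimplex ℝ ι) (k : ι) :
    Integrable (fun p : ι → ℝ => √(p k)) μ := by
  refine Integrable.mono' (integrable_const 1)
    (measurable_pi_apply k).sqrt.aestronglyMeasurable ?_
  filter_upwards [h] with p hp
  rw [Real.norm_of_nonneg (Real.sqrt_nonneg _)]
  exact Real.sqrt_le_one.mpr (mem_Icc_of_mem_stdSimplex hp k).2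

theorem integral_sum_sqrt_mul {q : ι → ℝ} (hq : 0 ≤ q)
    (hint : ∀ k, Integrable (fun p : ι → ℝ => √(p k)) μ) :
    ∫ p, ∑ k, √(p k * q k) ∂μ = ∑ k, √(q k) * ∫ p, √(p k) ∂μ := by
  simp_rw [fun (p : ι → ℝ) k => Real.sqrt_mul' (p k) (hq k)]
  rw [integral_finsetSum _ fun k _ => (hint k).mul_const _]
  exact Finset.sum_congr rfl fun k _ => by rw [integral_mul_const, mul_comm]

end Integral

theorem bayes_estimator_one_minus_B_measure {K : ℕ}
    (μ : Measure (Fin K → ℝ)) [IsProbabilityMeasure μ]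
    (hsupp : ∀ᵐ p ∂μ, (∀ k, 0 ≤ p k) ∧ ∑ k, p k = 1)
    (v : Fin K → ℝ) (hv : v = fun k => ∫ p, Real.sqrt (p k) ∂μ)
    (hv0 : v ≠ 0) :
    let nv : ℝ := Real.sqrt (∑ k, (v k) ^ 2)
    let qstar : Fin K → ℝ := fun k => (v k) ^ 2 / nv ^ 2
    (∀ k, 0 ≤ qstar k) ∧ (∑ k, qstar k = 1) ∧
    (∫ p, (∑ k, Real.sqrt (p k * qstar k)) ∂μ) = nv ∧
    (∀ q : Fin K → ℝ, (∀ k, 0 ≤ q k) → (∑ k, q k = 1) →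
      (∫ p, (∑ k, Real.sqrt (p k * q k)) ∂μ) ≤ nv) := by
  intro nv qstar
  have hv_nonneg : 0 ≤ v := fun k => by
    rw [hv]
    exact integral_nonneg fun p => Real.sqrt_nonneg _
  have hrisk : ∀ q : Fin K → ℝ, 0 ≤ q →
      ∫ p, ∑ k, √(p k * q k) ∂μ = ∑ k, √(q k) * v k := fun q hq => by
    rw [integral_sum_sqrt_mul hq (integrable_sqrt_apply_of_ae_mem_stdSimplex hsupp), hv]
  obtain ⟨hqstar_nonneg, hqstar_sum⟩ := sq_div_sqrt_sum_sq_mem_stdSimplex hv0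
  refine ⟨hqstar_nonneg, hqstar_sum, ?_, fun q hq_nonneg hq_sum => ?_⟩
  · rw [hrisk qstar hqstar_nonneg]
    exact sum_sqrt_sq_div_mul_eq_sqrt_sum_sq hv_nonneg
  · rw [hrisk q hq_nonneg]
    exact sum_sqrt_mul_le_sqrt_sum_sq ⟨hq_nonneg, hq_sum⟩ v
end

section
/- Let μ be a probability measure on the K-simplex, and let q* be the Bayes estimator for loss 1 − B² (i.e., q*_k = a_k² with a a top unit eigenvector of M_{ij} = E_μ[√(p_i p_j)]), and let m be the posterior mean m = E_μ[p]. Then E_μ[B(p, q*)²] ≥ E_μ[B(p, m)²]. -/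
open MeasureTheory
open scoped RealInnerProductSpace

lemma rayleigh_bound {K : ℕ} (M : Matrix (Fin K) (Fin K) ℝ) (hsym : M.IsHermitian)
    (lam : ℝ)
    (hlam_max : ∀ (c : ℝ) (x : Fin K → ℝ), x ≠ 0 → M.mulVec x = c • x → c ≤ lam)
    (b : Fin K → ℝ) :
    ∑ i, ∑ j, b i * (M i j * b j) ≤ lam * ∑ k, (b k) ^ 2 := by
  classical
  set v := hsym.eigenvectorBasis with hv
  set lamv := hsym.eigenvalues with hlv
  have hle : ∀ i, lamv i ≤ lam := fun i =>
    hlam_max _ _ (fun h => v.orthonormal.ne_zero i (by ext k; exact congrFun h k))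
      (hsym.mulVec_eigenvectorBasis i)
  set x : EuclideanSpace ℝ (Fin K) := WithLp.toLp 2 b with hx
  have hinner : ∀ (y z : EuclideanSpace ℝ (Fin K)), ⟪y, z⟫ = ∑ k, y k * z k := by
    intro y z; rw [PiLp.inner_apply]; simp [RCLike.inner_apply, mul_comm]
  have hMs : ∀ p q, M p q = M q p := by
    intro p q
    conv_lhs => rw [← hsym.eq]
    simp [Matrix.conjTranspose_apply]
  have key : ∑ i, ∑ j, b i * (M i j * b j) = ⟪x, (WithLp.toLp 2 (M.mulVec b) : EuclideanSpace ℝ (Fin K))⟫ := by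
    rw [hinner]
    simp [hx, Matrix.mulVec, dotProduct, Finset.mul_sum]
  have step : ∀ i, ⟪(v i), (WithLp.toLp 2 (M.mulVec b) : EuclideanSpace ℝ (Fin K))⟫ = lamv i * ⟪(v i), x⟫ := by
    intro i
    have hmv := hsym.mulVec_eigenvectorBasis i
    rw [hinner, hinner]
    calc ∑ k, v i k * (WithLp.toLp 2 (M.mulVec b) : EuclideanSpace ℝ (Fin K)) k
        = ∑ k, ∑ j, v i k * (M k j * b j) := by
          simp [Matrix.mulVec, dotProduct, Finset.mul_sum]
      _ = ∑ j, ∑ k, M j k * v i k * b j := by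
          rw [Finset.sum_comm]
          exact Finset.sum_congr rfl fun j _ => Finset.sum_congr rfl fun k _ => by
            rw [hMs k j]; ring
      _ = ∑ j, (M.mulVec (⇑(v i))) j * b j := by
          simp [Matrix.mulVec, dotProduct, Finset.sum_mul]
      _ = ∑ j, (lamv i • ⇑(v i)) j * b j := by rw [hmv]
      _ = lamv i * ∑ j, v i j * x j := by
          rw [Finset.mul_sum]
          exact Finset.sum_congr rfl fun j _ => by simp [smul_eq_mul]; ring
  rw [key, ← v.sum_inner_mul_inner x (WithLp.toLp 2 (M.mulVec b) : EuclideanSpace ℝ (Fin K))]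
  have rew : ∑ i, ⟪x, v i⟫ * ⟪v i, (WithLp.toLp 2 (M.mulVec b) : EuclideanSpace ℝ (Fin K))⟫
      = ∑ i, lamv i * ⟪v i, x⟫ ^ 2 :=
    Finset.sum_congr rfl fun i _ => by rw [step i, real_inner_comm x (v i)]; ring
  rw [rew]
  have bnd : ∑ i, lamv i * ⟪v i, x⟫ ^ 2 ≤ ∑ i, lam * ⟪v i, x⟫ ^ 2 :=
    Finset.sum_le_sum fun i _ => mul_le_mul_of_nonneg_right (hle i) (sq_nonneg _)
  refine bnd.trans (le_of_eq ?_)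
  have : ∑ i, lam * ⟪v i, x⟫ ^ 2 = lam * ∑ i, ⟪x, v i⟫ * ⟪v i, x⟫ := by
    rw [Finset.mul_sum]
    exact Finset.sum_congr rfl fun i _ => by rw [real_inner_comm x (v i)]; ring
  rw [this, v.sum_inner_mul_inner x x, hinner]
  simp [sq, hx]

theorem bayes_beats_mean {K : ℕ}
    (μ : Measure (Fin K → ℝ)) [IsProbabilityMeasure μ]
    (hsupp : ∀ᵐ p ∂μ, (∀ k, 0 ≤ p k) ∧ ∑ k, p k = 1)
    (M : Matrix (Fin K) (Fin K) ℝ)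
    (hM : M = Matrix.of fun i j => ∫ p, Real.sqrt (p i * p j) ∂μ)
    (lam : ℝ) (a : Fin K → ℝ)
    (ha_unit : ∑ k, (a k) ^ 2 = 1)
    (ha_eig : M.mulVec a = lam • a)
    (hlam_max : ∀ (c : ℝ) (x : Fin K → ℝ), x ≠ 0 → M.mulVec x = c • x → c ≤ lam)
    (qstar m : Fin K → ℝ)
    (hqstar : qstar = fun k => (a k) ^ 2)
    (hm : m = fun k => ∫ p, p k ∂μ) :
    (∫ p, (∑ k, Real.sqrt (p k * m k)) ^ 2 ∂μ) ≤
      (∫ p, (∑ k, Real.sqrt (p k * qstar k)) ^ 2 ∂μ) := by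
  classical
  -- a.e. bounds
  have hbound : ∀ᵐ p ∂μ, ∀ k, 0 ≤ p k ∧ p k ≤ 1 := by
    filter_upwards [hsupp] with p hp k
    refine ⟨hp.1 k, ?_⟩
    calc p k ≤ ∑ j, p j := Finset.single_le_sum (fun j _ => hp.1 j) (Finset.mem_univ k)
      _ = 1 := hp.2
  -- measurability and integrability
  have meas : ∀ i j : Fin K, Measurable fun p : Fin K → ℝ => Real.sqrt (p i * p j) :=
    fun i j => Real.continuous_sqrt.measurable.comp ((measurable_pi_apply i).mul (measurable_pi_apply j))
  have integ : ∀ i j : Fin K, Integrable (fun p : Fin K → ℝ => Real.sqrt (p i * p j)) μ := by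
    intro i j
    refine Integrable.mono' (integrable_const 1) (meas i j).aestronglyMeasurable ?_
    filter_upwards [hbound] with p hp
    rw [Real.norm_eq_abs, abs_of_nonneg (Real.sqrt_nonneg _)]
    refine Real.sqrt_le_one.mpr ?_
    calc p i * p j ≤ 1 * 1 := mul_le_mul (hp i).2 (hp j).2 (hp j).1 zero_le_one
      _ = 1 := by ring
  have integ_p : ∀ k : Fin K, Integrable (fun p : Fin K → ℝ => p k) μ := by
    intro k
    refine Integrable.mono' (integrable_const 1) (measurable_pi_apply k).aestronglyMeasurable ?_
    filter_upwards [hbound] with p hp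
    rw [Real.norm_eq_abs, abs_of_nonneg (hp k).1]; exact (hp k).2
  have hMentry : ∀ i j, M i j = ∫ p, Real.sqrt (p i * p j) ∂μ := by
    intro i j; rw [hM]; rfl
  have hMnn : ∀ i j, 0 ≤ M i j := by
    intro i j; rw [hMentry]
    exact integral_nonneg fun p => Real.sqrt_nonneg _
  have hsym : M.IsHermitian := by
    ext i j
    simp only [Matrix.conjTranspose_apply, star_trivial, hMentry]
    congr 1; ext p; rw [mul_comm]
  -- key expansion
  have expand : ∀ c : Fin K → ℝ, (∀ k, 0 ≤ c k) →
      (∫ p, (∑ k, Real.sqrt (p k * c k)) ^ 2 ∂μ)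
        = ∑ i, ∑ j, Real.sqrt (c i) * (M i j * Real.sqrt (c j)) := by
    intro c hc
    have hcongr : ∀ᵐ p ∂μ, (∑ k, Real.sqrt (p k * c k)) ^ 2
        = ∑ i, ∑ j, Real.sqrt (c i) * (Real.sqrt (p i * p j) * Real.sqrt (c j)) := by
      filter_upwards [hbound] with p hp
      have h1 : ∀ k, Real.sqrt (p k * c k) = Real.sqrt (p k) * Real.sqrt (c k) :=
        fun k => Real.sqrt_mul (hp k).1 _
      simp_rw [h1, sq, Finset.sum_mul_sum]
      refine Finset.sum_congr rfl fun i _ => Finset.sum_congr rfl fun j _ => ?_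
      rw [Real.sqrt_mul (hp i).1]
      ring
    rw [integral_congr_ae hcongr]
    rw [integral_finset_sum _ (fun i _ => by
      exact integrable_finset_sum _ (fun j _ => ((integ i j).mul_const _).const_mul _))]
    refine Finset.sum_congr rfl fun i _ => ?_
    rw [integral_finset_sum _ (fun j _ => ((integ i j).mul_const _).const_mul _)]
    refine Finset.sum_congr rfl fun j _ => ?_
    rw [integral_const_mul, integral_mul_const, hMentry]
  -- properties of m
  have hmnn : ∀ k, 0 ≤ m k := by
    intro k; rw [hm]
    refine integral_nonneg_of_ae ?_
    filter_upwards [hbound] with p hp; exact (hp k).1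
  have hmsum : ∑ k, m k = 1 := by
    rw [hm]
    rw [← integral_finset_sum _ (fun k _ => integ_p k)]
    have : ∀ᵐ p ∂μ, ∑ k, p k = (1 : ℝ) := by filter_upwards [hsupp] with p hp; exact hp.2
    rw [integral_congr_ae this]
    simp
  have hqnn : ∀ k, 0 ≤ qstar k := by intro k; rw [hqstar]; positivity
  -- LHS bound
  have hLHS : (∫ p, (∑ k, Real.sqrt (p k * m k)) ^ 2 ∂μ) ≤ lam := by
    rw [expand m hmnn]
    have := rayleigh_bound M hsym lam hlam_max (fun k => Real.sqrt (m k))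
    refine this.trans (le_of_eq ?_)
    have : ∑ k, Real.sqrt (m k) ^ 2 = ∑ k, m k :=
      Finset.sum_congr rfl fun k _ => Real.sq_sqrt (hmnn k)
    rw [this, hmsum, mul_one]
  -- RHS bound
  have hRHS : lam ≤ (∫ p, (∑ k, Real.sqrt (p k * qstar k)) ^ 2 ∂μ) := by
    rw [expand qstar hqnn]
    have hsq : ∀ k, Real.sqrt (qstar k) = |a k| := by
      intro k; rw [hqstar]; exact Real.sqrt_sq_eq_abs (a k)
    have hquad : lam = ∑ i, ∑ j, a i * (M i j * a j) := by
      have h1 : ∀ i, (M.mulVec a) i = ∑ j, M i j * a j := fun i => rfl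
      have h2 : ∑ i, a i * (M.mulVec a) i = ∑ i, a i * (lam * a i) := by
        rw [ha_eig]; rfl
      calc lam = lam * ∑ k, (a k) ^ 2 := by rw [ha_unit, mul_one]
        _ = ∑ i, a i * (lam * a i) := by rw [Finset.mul_sum]; exact Finset.sum_congr rfl fun i _ => by ring
        _ = ∑ i, a i * (M.mulVec a) i := h2.symm
        _ = ∑ i, ∑ j, a i * (M i j * a j) := by
            refine Finset.sum_congr rfl fun i _ => ?_
            rw [h1, Finset.mul_sum]
    rw [hquad]
    refine Finset.sum_le_sum fun i _ => Finset.sum_le_sum fun j _ => ?_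
    rw [hsq i, hsq j]
    calc a i * (M i j * a j) ≤ |a i * (M i j * a j)| := le_abs_self _
      _ = |a i| * (M i j * |a j|) := by
          rw [abs_mul, abs_mul, abs_of_nonneg (hMnn i j)]
  exact hLHS.trans hRHS
end
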